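/- If A <_X B ⊃ C (i.e. B ⊃ C is obtained from A by a nonempty sequence of substitutions of X-free formulas for variables distinct from X), then there exist sub-formulas A₁ and A₂ of A such that A₁ ≤_X B and A₂ ≤_X C. -/

import Mathlib

namespace RPT

/-- Formulas of second-order propositional logic (variables, ⊃, ∀). -/
inductive Frm : Type where
  | var : ℕ → Frm
  | imp : Frm → Frm → Frm
  | all : ℕ → Frm → Frm
deriving DecidableEq

namespace Frm

/-- `A.occursFree X` : the variable `X` occurs free in `A`. -/
def occursFree : Frm → ℕ → Bool
  | .var Y, X => Y == X
  | .imp A B, X => A.occursFree X || B.occursFree X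
  | .all Y A, X => Y != X && A.occursFree X

/-- `A.subst C X` : the substitution `A[C/X]`. -/
def subst : Frm → Frm → ℕ → Frm
  | .var Y, C, X => if Y = X then C else .var Y
  | .imp A B, C, X => .imp (A.subst C X) (B.subst C X)
  | .all Y A, C, X => if Y = X then .all Y A else .all Y (A.subst C X)

end Frm

/-- `SpX X C` : `C` is strictly positive relative to `X`. -/
inductive SpX (X : ℕ) : Frm → Prop where
  | var (Z : ℕ) : SpX X (.var Z)
  | imp {A B : Frm} : A.occursFree X = false → SpX X B → SpX X (.imp A B)
  | all {Y : ℕ} {A : Frm} : Y ≠ X → SpX X A → SpX X (.all Y A)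

/-- `Subf A B` : `A` is a sub-formula of `B`. -/
inductive Subf : Frm → Frm → Prop where
  | refl (A : Frm) : Subf A A
  | impL {A B C : Frm} : Subf A B → Subf A (.imp B C)
  | impR {A B C : Frm} : Subf A C → Subf A (.imp B C)
  | all {A B : Frm} {Y : ℕ} : Subf A B → Subf A (.all Y B)

/-- One substitution step: `A <'_X B` iff `B ≡ A[C/Y]` for some `Y ≢ X` and
some formula `C` in which `X` does not occur free. -/
def stepX (X : ℕ) (A B : Frm) : Prop :=
  ∃ (Y : ℕ) (C : Frm), Y ≠ X ∧ C.occursFree X = false ∧ B = A.subst C Y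

theorem Frm.subst_eq_imp {D E B C : Frm} {Y : ℕ} (h : D.subst E Y = .imp B C) :
    (∃ D₁ D₂, D = .imp D₁ D₂ ∧ D₁.subst E Y = B ∧ D₂.subst E Y = C) ∨
      (D = .var Y ∧ E = .imp B C) := by
  cases D with
  | var Z =>
    by_cases hZ : Z = Y
    · simp_all [Frm.subst]
    · simp [Frm.subst, hZ] at h
  | imp D₁ D₂ =>
    simp only [Frm.subst, Frm.imp.injEq] at h
    exact .inl ⟨D₁, D₂, rfl, h⟩
  | all Z D =>
    simp only [Frm.subst] at h
    split at h <;> cases h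

/-- When a variable is replaced by the whole implication, both components are `X`-free, so that
variable also steps to either of them. -/
theorem stepX_imp {X : ℕ} {D B C : Frm} (h : stepX X D (.imp B C)) :
    (∃ D₁ D₂, D = .imp D₁ D₂ ∧ stepX X D₁ B ∧ stepX X D₂ C) ∨
      (stepX X D B ∧ stepX X D C) := by
  obtain ⟨Y, E, hY, hE, hD⟩ := h
  rcases Frm.subst_eq_imp hD.symm with ⟨D₁, D₂, rfl, hB, hC⟩ | ⟨rfl, rfl⟩
  · exact .inl ⟨D₁, D₂, rfl, ⟨Y, E, hY, hE, hB.symm⟩, ⟨Y, E, hY, hE, hC.symm⟩⟩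
  · simp only [Frm.occursFree, Bool.or_eq_false_iff] at hE
    exact .inr ⟨⟨Y, B, hY, hE.1, by simp [Frm.subst]⟩, ⟨Y, C, hY, hE.2, by simp [Frm.subst]⟩⟩

theorem exists_subf_of_reflTransGen_imp {X : ℕ} {A B C : Frm}
    (h : Relation.ReflTransGen (stepX X) A (.imp B C)) :
    ∃ A₁ A₂ : Frm, Subf A₁ A ∧ Subf A₂ A ∧
      Relation.ReflTransGen (stepX X) A₁ B ∧
      Relation.ReflTransGen (stepX X) A₂ C := by
  generalize hD : Frm.imp B C = D at h
  induction h generalizing B C with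
  | refl =>
    subst hD
    exact ⟨B, C, .impL (.refl B), .impR (.refl C), .refl, .refl⟩
  | tail hAD hstep ih =>
    subst hD
    rcases stepX_imp hstep with ⟨D₁, D₂, rfl, hB, hC⟩ | ⟨hB, hC⟩
    · obtain ⟨A₁, A₂, h₁, h₂, hAB, hAC⟩ := ih rfl
      exact ⟨A₁, A₂, h₁, h₂, hAB.tail hB, hAC.tail hC⟩
    · exact ⟨A, A, .refl A, .refl A, hAD.tail hB, hAD.tail hC⟩

/-- if `A <_X B ⊃ C`, then there are sub-formulas `A₁, A₂` of `A`
with `A₁ ≤_X B` and `A₂ ≤_X C`. -/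
theorem ltX_implication (X : ℕ) (A B C : Frm)
    (h : Relation.TransGen (stepX X) A (.imp B C)) :
    ∃ A₁ A₂ : Frm, Subf A₁ A ∧ Subf A₂ A ∧
      Relation.ReflTransGen (stepX X) A₁ B ∧
      Relation.ReflTransGen (stepX X) A₂ C :=
  exists_subf_of_reflTransGen_imp h.to_reflTransGen

end RPT
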